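/- Let N be a Ding injective right R-module with finite FP-injective dimension (i.e., there exists n ≥ 0 such that Ext^{n+1}_R(F, N) = 0 for all finitely presented right R-modules F). Then N is injective. Consequently, a Ding injective module is either injective or has FP-injective dimension ∞. -/

import Mathlib

/-! Preamble: basic notions of relative homological algebra over a
(possibly noncommutative) ring.  Right `R`-modules are modeled as
(left) modules over the opposite ring `Rᵐᵒᵖ`. -/

open CategoryTheory Opposite

noncomputable section

/-- The Ext group `Ext^n(A, B)` in the category of left `S`-modules,
computed as a derived functor (of `ℤ`-modules). -/
def extGroup (S : Type) [Ring S] (n : ℕ) (A B : ModuleCat.{0} S) : Type :=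
  ((_root_.Ext ℤ (ModuleCat.{0} S) n).obj (op A)).obj B

/-- Vanishing of the Ext group `Ext^n(A, B)`. -/
def extVanish (S : Type) [Ring S] (n : ℕ) (A B : ModuleCat.{0} S) : Prop :=
  Subsingleton (extGroup S n A B)

/-- A module `E` is FP-injective if `Ext¹(F, E) = 0` for every finitely
presented module `F`. -/
def FPInjective (S : Type) [Ring S] (E : ModuleCat.{0} S) : Prop :=
  ∀ F : ModuleCat.{0} S, Module.FinitePresentation S F → extVanish S 1 F E

/-- `E` satisfies the Ext-criterion for FP-injective dimension `≤ n`: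
`Ext^{n+1}(F, E) = 0` for every finitely presented `F`. -/
def fpInjDimLE (S : Type) [Ring S] (E : ModuleCat.{0} S) (n : ℕ) : Prop :=
  ∀ F : ModuleCat.{0} S, Module.FinitePresentation S F → extVanish S (n + 1) F E

/-- `E` has FP-injective dimension exactly `n` : `n` is the least natural number
with `Ext^{n+1}(F, E) = 0` for all finitely presented `F`. -/
def fpInjDimEq (S : Type) [Ring S] (E : ModuleCat.{0} S) (n : ℕ) : Prop :=
  fpInjDimLE S E n ∧ ∀ m : ℕ, fpInjDimLE S E m → n ≤ m

/-- `E` has finite FP-injective dimension. -/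
def fpInjDimFinite (S : Type) [Ring S] (E : ModuleCat.{0} S) : Prop :=
  ∃ n : ℕ, fpInjDimLE S E n

/-- A ring `S` is left coherent if every finitely generated left ideal is
finitely presented (as a left `S`-module). -/
def LeftCoherent (S : Type) [Ring S] : Prop :=
  ∀ I : Submodule S S, I.FG → Module.FinitePresentation S I

/-- A ring `S` is right coherent if its opposite ring is left coherent. -/
def RightCoherent (S : Type) [Ring S] : Prop :=
  LeftCoherent Sᵐᵒᵖ

section BTensor

variable (R : Type) [Ring R]

/-- The subgroup of `A ⊗_ℤ B` by which one quotients to obtain the balanced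
tensor product `A ⊗_R B` of a right `R`-module `A` and a left `R`-module `B`. -/
def btRel (A : Type) [AddCommGroup A] [Module Rᵐᵒᵖ A]
    (B : Type) [AddCommGroup B] [Module R B] :
    Submodule ℤ (TensorProduct ℤ A B) :=
  Submodule.span ℤ
    {x | ∃ (a : A) (r : R) (b : B),
      x = (MulOpposite.op r • a) ⊗ₜ[ℤ] b - a ⊗ₜ[ℤ] (r • b)}

/-- The balanced tensor product `A ⊗_R B` of a right `R`-module `A` and a left
`R`-module `B`, defined as a quotient of `A ⊗_ℤ B`. -/
abbrev BTensor (A : Type) [AddCommGroup A] [Module Rᵐᵒᵖ A]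
    (B : Type) [AddCommGroup B] [Module R B] : Type :=
  TensorProduct ℤ A B ⧸ btRel R A B

variable {A A' : Type} [AddCommGroup A] [Module Rᵐᵒᵖ A] [AddCommGroup A'] [Module Rᵐᵒᵖ A']
variable {B B' : Type} [AddCommGroup B] [Module R B] [AddCommGroup B'] [Module R B']

/-- The map `A ⊗_R B → A ⊗_R B'` induced by a map `f : B → B'` of left
`R`-modules. -/
def BTensor.lmap (f : B →ₗ[R] B') (A : Type) [AddCommGroup A] [Module Rᵐᵒᵖ A] :
    BTensor R A B →ₗ[ℤ] BTensor R A B' :=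
  Submodule.mapQ (btRel R A B) (btRel R A B')
    (TensorProduct.map LinearMap.id f.toAddMonoidHom.toIntLinearMap)
    (by
      rw [btRel, Submodule.span_le]
      rintro x ⟨a, r, b, rfl⟩
      simp only [SetLike.mem_coe, Submodule.mem_comap, map_sub, TensorProduct.map_tmul,
        LinearMap.id_apply, AddMonoidHom.coe_toIntLinearMap, LinearMap.toAddMonoidHom_coe,
        map_smul]
      exact Submodule.subset_span ⟨a, r, f b, by erw [map_sub, TensorProduct.map_tmul, TensorProduct.map_tmul]; simp⟩)

/-- The map `A ⊗_R B → A' ⊗_R B` induced by a map `g : A → A'` of right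
`R`-modules. -/
def BTensor.rmap (g : A →ₗ[Rᵐᵒᵖ] A') (B : Type) [AddCommGroup B] [Module R B] :
    BTensor R A B →ₗ[ℤ] BTensor R A' B :=
  Submodule.mapQ (btRel R A B) (btRel R A' B)
    (TensorProduct.map g.toAddMonoidHom.toIntLinearMap LinearMap.id)
    (by
      rw [btRel, Submodule.span_le]
      rintro x ⟨a, r, b, rfl⟩
      simp only [SetLike.mem_coe, Submodule.mem_comap, map_sub, TensorProduct.map_tmul,
        LinearMap.id_apply, AddMonoidHom.coe_toIntLinearMap, LinearMap.toAddMonoidHom_coe,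
        map_smul]
      exact Submodule.subset_span ⟨g a, r, b, by erw [map_sub, TensorProduct.map_tmul, TensorProduct.map_tmul]; simp⟩)

/-- A right `R`-module `A` is flat if the functor `A ⊗_R —` preserves
injectivity of maps of left `R`-modules. -/
def FlatRight (A : ModuleCat.{0} Rᵐᵒᵖ) : Prop :=
  ∀ (B B' : ModuleCat.{0} R) (f : B →ₗ[R] B'),
    Function.Injective f → Function.Injective (BTensor.lmap R f A)

/-- A left `R`-module `B` is flat if the functor `— ⊗_R B` preserves
injectivity of maps of right `R`-modules. -/
def FlatLeft (B : ModuleCat.{0} R) : Prop :=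
  ∀ (A A' : ModuleCat.{0} Rᵐᵒᵖ) (g : A →ₗ[Rᵐᵒᵖ] A'),
    Function.Injective g → Function.Injective (BTensor.rmap R g B)

end BTensor

/-- A module `N` is Ding injective if there is a doubly infinite exact sequence
of injective modules, with `N` as one of the kernels, which stays exact after
applying `Hom(E, —)` for every FP-injective module `E`. -/
def DingInjective (S : Type) [Ring S] (N : ModuleCat.{0} S) : Prop :=
  ∃ (I : ℤ → ModuleCat.{0} S) (d : ∀ n : ℤ, I n →ₗ[S] I (n + 1)),
    (∀ n, Module.Injective S (I n)) ∧
    (∀ n, Function.Exact (d n) (d (n + 1))) ∧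
    Nonempty (N ≃ₗ[S] LinearMap.ker (d 0)) ∧
    (∀ E : ModuleCat.{0} S, FPInjective S E → ∀ n : ℤ,
      Function.Exact (fun g : E →ₗ[S] I n => (d n).comp g)
        (fun g : E →ₗ[S] I (n + 1) => (d (n + 1)).comp g))

/-- A right `R`-module `M` is Ding projective if there is a doubly infinite
exact sequence of projective right modules, with `M` as one of the kernels,
which stays exact after applying `Hom(—, F)` for every flat right module `F`. -/
def DingProjective (R : Type) [Ring R] (M : ModuleCat.{0} Rᵐᵒᵖ) : Prop :=
  ∃ (P : ℤ → ModuleCat.{0} Rᵐᵒᵖ) (d : ∀ n : ℤ, P n →ₗ[Rᵐᵒᵖ] P (n + 1)),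
    (∀ n, Module.Projective Rᵐᵒᵖ (P n)) ∧
    (∀ n, Function.Exact (d n) (d (n + 1))) ∧
    Nonempty (M ≃ₗ[Rᵐᵒᵖ] LinearMap.ker (d 0)) ∧
    (∀ F : ModuleCat.{0} Rᵐᵒᵖ, FlatRight R F → ∀ n : ℤ,
      Function.Exact (fun g : P (n + 1 + 1) →ₗ[Rᵐᵒᵖ] F => g.comp (d (n + 1)))
        (fun g : P (n + 1) →ₗ[Rᵐᵒᵖ] F => g.comp (d n)))

/-- A right `R`-module `M` is Ding flat if there is a doubly infinite exact
sequence of flat right modules, with `M` as one of the kernels, which stays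
exact after applying `— ⊗_R E` for every FP-injective left module `E`. -/
def DingFlat (R : Type) [Ring R] (M : ModuleCat.{0} Rᵐᵒᵖ) : Prop :=
  ∃ (F : ℤ → ModuleCat.{0} Rᵐᵒᵖ) (d : ∀ n : ℤ, F n →ₗ[Rᵐᵒᵖ] F (n + 1)),
    (∀ n, FlatRight R (F n)) ∧
    (∀ n, Function.Exact (d n) (d (n + 1))) ∧
    Nonempty (M ≃ₗ[Rᵐᵒᵖ] LinearMap.ker (d 0)) ∧
    (∀ E : ModuleCat.{0} R, FPInjective R E → ∀ n : ℤ,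
      Function.Exact (BTensor.rmap R (d n) E) (BTensor.rmap R (d (n + 1)) E))

/-- A left `R`-module `M` is Gorenstein flat if there is a doubly infinite
exact sequence of flat left modules, with `M` as one of the kernels, which
stays exact after applying `E ⊗_R —` for every injective right module `E`. -/
def GorensteinFlat (R : Type) [Ring R] (M : ModuleCat.{0} R) : Prop :=
  ∃ (F : ℤ → ModuleCat.{0} R) (d : ∀ n : ℤ, F n →ₗ[R] F (n + 1)),
    (∀ n, FlatLeft R (F n)) ∧
    (∀ n, Function.Exact (d n) (d (n + 1))) ∧
    Nonempty (M ≃ₗ[R] LinearMap.ker (d 0)) ∧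
    (∀ E : ModuleCat.{0} Rᵐᵒᵖ, Module.Injective Rᵐᵒᵖ E → ∀ n : ℤ,
      Function.Exact (BTensor.lmap R (d n) E) (BTensor.lmap R (d (n + 1)) E))

/-- A right `R`-module `M` has flat dimension `≤ n` : there is an exact
resolution `0 → F_n → ⋯ → F_0 → M → 0` by flat right modules (encoded as an
`ℕ`-indexed resolution which vanishes beyond degree `n`). -/
def flatDimLE (R : Type) [Ring R] (M : ModuleCat.{0} Rᵐᵒᵖ) (n : ℕ) : Prop :=
  ∃ (F : ℕ → ModuleCat.{0} Rᵐᵒᵖ) (d : ∀ k : ℕ, F (k + 1) →ₗ[Rᵐᵒᵖ] F k)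
    (ε : F 0 →ₗ[Rᵐᵒᵖ] M),
    (∀ k, FlatRight R (F k)) ∧
    Function.Surjective ε ∧
    Function.Exact (d 0) ε ∧
    (∀ k, Function.Exact (d (k + 1)) (d k)) ∧
    (∀ k, n < k → Subsingleton (F k))

/-- A right `R`-module has finite flat dimension. -/
def flatDimFinite (R : Type) [Ring R] (M : ModuleCat.{0} Rᵐᵒᵖ) : Prop :=
  ∃ n : ℕ, flatDimLE R M n

/-- A ring `R` is an `n`-FC ring if it is left and right coherent and has left
and right self FP-injective dimension equal to `n`. -/
def IsFCRing (R : Type) [Ring R] (n : ℕ) : Prop :=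
  LeftCoherent R ∧ RightCoherent R ∧
    fpInjDimEq R (ModuleCat.of R R) n ∧
    fpInjDimEq Rᵐᵒᵖ (ModuleCat.of Rᵐᵒᵖ Rᵐᵒᵖ) n

/-- A ring is Ding-Chen if it is an `n`-FC ring for some `n`. -/
def IsDingChen (R : Type) [Ring R] : Prop :=
  ∃ n : ℕ, IsFCRing R n

end

/-! Write `Zᵏ = ker dᵏ` for the cycles of a complete injective resolution `I` of `N = Z⁰` that
stays exact under `Hom(E, -)` for FP-injective `E`. If `Zᵏ⁺¹` is FP-injective, this exactness
lifts the inclusion `Zᵏ⁺¹ → Iᵏ⁺¹` through `dᵏ`, so `0 → Zᵏ → Iᵏ → Zᵏ⁺¹ → 0` splits and `Zᵏ`,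
`Zᵏ⁺¹` are injective as direct summands of `Iᵏ`. Since `Iᵏ` is injective, the same sequence
lowers the FP-injective dimension by one from `Zᵏ` to `Zᵏ⁺¹`. So if `Z⁰` has FP-injective
dimension at most `n`, then `Zⁿ` is FP-injective, hence injective, and going back down, the
splittings make `Zⁿ⁻¹, …, Z⁰` injective. -/

open CategoryTheory.Limits

universe u v

section Abelian

variable {C : Type u} [Category.{v} C] [Abelian C] [EnoughProjectives C]
  (R : Type*) [Ring R] [Linear R C]

theorem CategoryTheory.ProjectiveResolution.isZero_Ext_succ_iff {X : C}
    (P : ProjectiveResolution X) (Y : C) (n : ℕ) :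
    IsZero (((Ext R C (n + 1)).obj (op X)).obj Y) ↔
      ∀ g : P.complex.X (n + 1) ⟶ Y, P.complex.d (n + 2) (n + 1) ≫ g = 0 →
        ∃ h : P.complex.X n ⟶ Y, P.complex.d (n + 1) n ≫ h = g := by
  rw [(P.isoExt (n + 1) Y).isZero_iff, ← HomologicalComplex.exactAt_iff_isZero_homology,
    HomologicalComplex.exactAt_iff' _ n (n + 1) (n + 2) (by simp) (by simp),
    ShortComplex.moduleCat_exact_iff]
  rfl

theorem isZero_Ext_succ_of_injective (X Y : C) [Injective Y] (n : ℕ) :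
    IsZero (((Ext R C (n + 1)).obj (op X)).obj Y) := by
  let P := ProjectiveResolution.of X
  exact (P.isZero_Ext_succ_iff R Y n).2 fun g hg =>
    ⟨(P.exact_succ n).descToInjective g hg, (P.exact_succ n).comp_descToInjective g hg⟩

theorem CategoryTheory.ShortComplex.ShortExact.isZero_Ext_succ_X₃ {S : ShortComplex C}
    (hS : S.ShortExact) [Injective S.X₂] (X : C) (n : ℕ)
    (h₁ : IsZero (((Ext R C (n + 2)).obj (Opposite.op X)).obj S.X₁)) :
    IsZero (((Ext R C (n + 1)).obj (Opposite.op X)).obj S.X₃) := by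
  let P := ProjectiveResolution.of X
  have := hS.epi_g
  have := hS.mono_f
  rw [P.isZero_Ext_succ_iff R S.X₁ (n + 1)] at h₁
  refine (P.isZero_Ext_succ_iff R S.X₃ n).2 fun g hg => ?_
  -- lift the cocycle `g` to `S.X₂`; its coboundary then lands in `S.X₁`
  let g₂ : P.complex.X (n + 1) ⟶ S.X₂ := Projective.factorThru g S.g
  have hg₂ : g₂ ≫ S.g = g := Projective.factorThru_comp g S.g
  let k : P.complex.X (n + 2) ⟶ S.X₁ :=
    hS.exact.liftFromProjective (P.complex.d (n + 2) (n + 1) ≫ g₂) (by simp [hg₂, hg])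
  have hk : k ≫ S.f = P.complex.d (n + 2) (n + 1) ≫ g₂ := hS.exact.liftFromProjective_comp _ _
  obtain ⟨a, ha⟩ := h₁ k (by rw [← cancel_mono S.f]; simp [hk])
  have hb : P.complex.d (n + 2) (n + 1) ≫ (g₂ - a ≫ S.f) = 0 := by
    rw [Preadditive.comp_sub, ← Category.assoc, ha, hk, sub_self]
  refine ⟨(P.exact_succ n).descToInjective _ hb ≫ S.g, ?_⟩
  rw [(P.exact_succ n).comp_descToInjective_assoc, Preadditive.sub_comp, hg₂, Category.assoc,
    S.zero, comp_zero, sub_zero]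

end Abelian

section Modules

variable {S : Type} [Ring S]

theorem extVanish_iff_isZero (n : ℕ) (F E : ModuleCat.{0} S) :
    extVanish S n F E ↔ IsZero (((Ext ℤ (ModuleCat.{0} S) n).obj (op F)).obj E) :=
  ModuleCat.isZero_iff_subsingleton.symm

theorem FPInjective.of_injective (E : ModuleCat.{0} S) [Injective E] : FPInjective S E :=
  fun F _ => (extVanish_iff_isZero 1 F E).2 (isZero_Ext_succ_of_injective ℤ F E 0)

theorem fpInjDimLE.of_iso {E E' : ModuleCat.{0} S} (e : E ≅ E') {n : ℕ}
    (h : fpInjDimLE S E n) : fpInjDimLE S E' n := fun F hF => by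
  have hE := h F hF
  rw [extVanish_iff_isZero] at hE ⊢
  exact (((Ext ℤ (ModuleCat.{0} S) (n + 1)).obj (op F)).mapIso e).isZero_iff.1 hE

theorem CategoryTheory.ShortComplex.ShortExact.fpInjDimLE_X₃
    {T : ShortComplex (ModuleCat.{0} S)} (hT : T.ShortExact) [Injective T.X₂] {n : ℕ}
    (h : fpInjDimLE S T.X₁ (n + 1)) : fpInjDimLE S T.X₃ n :=
  fun F hF => (extVanish_iff_isZero _ F _).2 <|
    hT.isZero_Ext_succ_X₃ ℤ F n ((extVanish_iff_isZero _ F _).1 (h F hF))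

end Modules

section Cycles

variable {S : Type} [Ring S] {I : ℤ → ModuleCat.{0} S} {d : ∀ n : ℤ, I n →ₗ[S] I (n + 1)}

abbrev cyclesShortComplex (k : ℤ) (hk : ∀ x, d (k + 1) (d k x) = 0) :
    ShortComplex (ModuleCat.{0} S) :=
  ModuleCat.shortComplexOfCompEqZero (LinearMap.ker (d k)).subtype
    ((d k).codRestrict (LinearMap.ker (d (k + 1))) hk) (LinearMap.ext fun x => Subtype.ext x.2)

theorem cyclesShortComplex_shortExact {k : ℤ} (hk : Function.Exact (d k) (d (k + 1))) :
    (cyclesShortComplex k hk.apply_apply_eq_zero).ShortExact := by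
  refine ModuleCat.shortComplex_shortExact _ ?_ (Submodule.injective_subtype _) ?_
  · intro x
    rw [Subtype.ext_iff]
    exact LinearMap.exact_subtype_ker_map (d k) x
  · rintro ⟨y, hy⟩
    obtain ⟨x, rfl⟩ := (hk y).1 hy
    exact ⟨x, rfl⟩

theorem injective_cycles_of_comp_eq_subtype {k : ℤ} [Module.Injective S (I k)]
    (hk : Function.Exact (d k) (d (k + 1))) (s : LinearMap.ker (d (k + 1)) →ₗ[S] I k)
    (hs : d k ∘ₗ s = (LinearMap.ker (d (k + 1))).subtype) :
    Injective (ModuleCat.of S (LinearMap.ker (d k))) ∧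
      Injective (ModuleCat.of S (LinearMap.ker (d (k + 1)))) := by
  let T := cyclesShortComplex k hk.apply_apply_eq_zero
  have hT : T.ShortExact := cyclesShortComplex_shortExact hk
  have hsg : ModuleCat.ofHom s ≫ T.g = 𝟙 T.X₃ := by
    ext x
    exact LinearMap.congr_fun hs x
  let σ := ShortComplex.Splitting.ofExactOfSection T hT.exact _ hsg hT.mono_f
  have : Injective T.X₂ := Module.injective_object_of_injective_module S (I k)
  exact ⟨(Retract.mk T.f σ.r σ.f_r).injective, (Retract.mk σ.s T.g σ.s_g).injective⟩

theorem injective_cycles_of_fpInjDimLE (hinj : ∀ n, Module.Injective S (I n))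
    (hexact : ∀ n, Function.Exact (d n) (d (n + 1)))
    (hhom : ∀ E : ModuleCat.{0} S, FPInjective S E → ∀ n : ℤ,
      Function.Exact (fun g : E →ₗ[S] I n => (d n).comp g)
        (fun g : E →ₗ[S] I (n + 1) => (d (n + 1)).comp g))
    (n : ℕ) (k : ℤ) (hZ : fpInjDimLE S (ModuleCat.of S (LinearMap.ker (d k))) n) :
    Injective (ModuleCat.of S (LinearMap.ker (d k))) := by
  have split (k : ℤ) (hFP : FPInjective S (ModuleCat.of S (LinearMap.ker (d (k + 1))))) :
      Injective (ModuleCat.of S (LinearMap.ker (d k))) ∧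
        Injective (ModuleCat.of S (LinearMap.ker (d (k + 1)))) := by
    have := hinj k
    obtain ⟨s, hs⟩ := (hhom _ hFP k (LinearMap.ker (d (k + 1))).subtype).1
      (LinearMap.ext fun x => x.2)
    exact injective_cycles_of_comp_eq_subtype (hexact k) s hs
  induction n generalizing k with
  | zero =>
    obtain ⟨j, rfl⟩ : ∃ j, k = j + 1 := ⟨k - 1, by omega⟩
    exact (split j hZ).2
  | succ n ih =>
    have : Injective (cyclesShortComplex k (hexact k).apply_apply_eq_zero).X₂ :=
      Module.injective_object_of_injective_module S (I k) (inj := hinj k)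
    have := ih (k + 1) ((cyclesShortComplex_shortExact (hexact k)).fpInjDimLE_X₃ hZ)
    exact (split k (FPInjective.of_injective _)).1

end Cycles

/-- A Ding injective right `R`-module of finite FP-injective
dimension is injective. -/
theorem statement3 (R : Type) [Ring R] (N : ModuleCat.{0} Rᵐᵒᵖ)
    (hN : DingInjective Rᵐᵒᵖ N)
    (hfin : ∃ n : ℕ, fpInjDimLE Rᵐᵒᵖ N n) :
    Module.Injective Rᵐᵒᵖ N := by
  obtain ⟨I, d, hinj, hexact, ⟨e⟩, hhom⟩ := hN
  obtain ⟨n, hn⟩ := hfin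
  have := injective_cycles_of_fpInjDimLE hinj hexact hhom n 0 (hn.of_iso e.toModuleIso)
  exact Module.injective_module_of_injective_object _ _
    (inj := Injective.of_iso e.toModuleIso.symm this)
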